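/- Let (K,v) be a spherically complete valued field and f = (f_1,…,f_n) a system of n polynomials in n variables with coefficients in O. If b ∈ Oⁿ satisfies vf(b) > 2v det J_f(b), then there is a unique a ∈ Oⁿ with f(a) = 0 and v(a−b) = vJ_f*(b)f(b) − v det J_f(b) > v det J_f(b). -/

import Mathlib

section Ultrametric

variable {Y Y' : Type*} {Γ Γ' : Type*} [LinearOrder Γ] [OrderTop Γ]
  [LinearOrder Γ'] [OrderTop Γ']

/-- The axioms of an ultrametric space with distance values in `Γ` (with top element `∞`). -/
def IsUltrametric (u : Y → Y → Γ) : Prop :=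
  (∀ y z, u y z = ⊤ ↔ y = z) ∧
  (∀ x y z, min (u y x) (u x z) ≤ u y z) ∧
  (∀ y z, u y z = u z y)

/-- The closed ball of radius `α` around `y`. -/
def closedBall (u : Y → Y → Γ) (α : Γ) (y : Y) : Set Y := {z | α ≤ u y z}

/-- `B(x,y)`, the smallest closed ball containing `x` and `y`. -/
def smallBall (u : Y → Y → Γ) (x y : Y) : Set Y := closedBall u (u x y) x

/-- A ball: a union of a nonempty collection of closed balls having a common element. -/
def IsBall (u : Y → Y → Γ) (S : Set Y) : Prop :=
  ∃ C : Set (Γ × Y), C.Nonempty ∧ (∃ y₀, ∀ p ∈ C, y₀ ∈ closedBall u p.1 p.2) ∧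
    S = ⋃ p ∈ C, closedBall u p.1 p.2

/-- Spherical completeness: every nest of balls has nonempty intersection. -/
def SphericallyComplete (u : Y → Y → Γ) : Prop :=
  ∀ N : Set (Set Y), N.Nonempty → (∀ B ∈ N, IsBall u B) →
    IsChain (· ⊆ ·) N → (⋂₀ N).Nonempty

/-- `z'` is an attractor for `f`. -/
def IsAttractor (u : Y → Y → Γ) (u' : Y' → Y' → Γ') (f : Y → Y') (z' : Y') : Prop :=
  ∀ y : Y, f y ≠ z' → ∃ z : Y,
    u' (f y) z' < u' (f z) z' ∧ f '' smallBall u y z ⊆ smallBall u' (f y) z'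

/-- A map is immediate if every element of the target is an attractor for it. -/
def Immediate (u : Y → Y → Γ) (u' : Y' → Y' → Γ') (f : Y → Y') : Prop :=
  ∀ z' : Y', IsAttractor u u' f z'

end Ultrametric

/-- The axioms of a (Krull) valuation on a field, written additively, with
`v a = ⊤` iff `a = 0`. -/
def IsFieldVal {K : Type*} [Field K] {Γ : Type*} [AddCommGroup Γ] [LinearOrder Γ] [IsOrderedAddMonoid Γ]
    (v : K → WithTop Γ) : Prop :=
  (∀ a, v a = ⊤ ↔ a = 0) ∧ (∀ a b, v (a * b) = v a + v b) ∧
  (∀ a b, min (v a) (v b) ≤ v (a - b))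

/-- The minimum valuation on `Kⁿ`. -/
def minVal {K : Type*} [Field K] {Γ : Type*} [AddCommGroup Γ] [LinearOrder Γ] [IsOrderedAddMonoid Γ]
    (v : K → WithTop Γ) {n : ℕ} (x : Fin n → K) : WithTop Γ :=
  Finset.univ.inf fun i => v (x i)

/-!
Let `δ = v det J_f(b)` and let `N x = x - J_f(x)⁻¹ f(x)` be the Newton map. On the ball
`v(x - b) > δ` the Jacobian determinant keeps valuation `δ`, and Taylor's formula writes
`N x - N y` as `J_f(x)⁻¹` applied to terms of valuation at least
`v(x - y) + min(v(x - y), v(y - N y))`; so `N` strictly increases `v(x - y)` as soon as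
`v(y - N y) > δ`. The hypothesis `vf(b) > 2δ` gives `v(b - N b) > δ`, and then `N` is strictly
contracting on the ball `B(b, N b)`. In a spherically complete ultrametric space (and `Kⁿ` is one
when `K` is) such a map has a fixed point `a` with `v(b - a) = v(b - N b)`: by Zorn's lemma some
ball `B(y, N y)` is minimal, and `B(N y, N (N y))` is strictly smaller unless `N y = y`.
The fixed point is the root, `v(b - N b) + δ = v J_f*(b) f(b)` gives its distance to `b`, and the
contraction on the ball `v(x - b) > δ` gives uniqueness.
-/

namespace IsUltrametric

variable {Y Γ : Type*} [LinearOrder Γ] [OrderTop Γ] {u : Y → Y → Γ} (hu : IsUltrametric u)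
include hu

theorem dist_self (y : Y) : u y y = ⊤ := (hu.1 y y).2 rfl

theorem dist_comm (y z : Y) : u y z = u z y := hu.2.2 y z

theorem le_dist_of_le_of_le {α : Γ} {x y z : Y} (hyx : α ≤ u y x) (hxz : α ≤ u x z) :
    α ≤ u y z :=
  (le_min hyx hxz).trans (hu.2.1 x y z)

theorem self_mem_closedBall (α : Γ) (y : Y) : y ∈ closedBall u α y :=
  le_top.trans_eq (hu.dist_self y).symm

theorem closedBall_subset_of_mem {α β : Γ} {y z : Y} (hz : z ∈ closedBall u α y) (hαβ : α ≤ β) :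
    closedBall u β z ⊆ closedBall u α y := fun _ hq =>
  hu.le_dist_of_le_of_le hz (hαβ.trans hq)

theorem mem_closedBall_iff_of_mem {α : Γ} {y y₀ z : Y} (hy₀ : y₀ ∈ closedBall u α y) :
    z ∈ closedBall u α y ↔ α ≤ u y₀ z :=
  ⟨fun hz => hu.le_dist_of_le_of_le (hu.dist_comm y y₀ ▸ hy₀) hz,
    fun hz => hu.le_dist_of_le_of_le hy₀ hz⟩

theorem isBall_closedBall (α : Γ) (y : Y) : IsBall u (closedBall u α y) :=
  ⟨{(α, y)}, Set.singleton_nonempty _, ⟨y, by simpa using hu.self_mem_closedBall α y⟩, by simp⟩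

theorem isBall_iff {S : Set Y} :
    IsBall u S ↔ ∃ y₀ : Y, ∃ R : Set Γ, R.Nonempty ∧ S = {z | ∃ α ∈ R, α ≤ u y₀ z} := by
  constructor
  · rintro ⟨C, hC, ⟨y₀, hy₀⟩, rfl⟩
    refine ⟨y₀, Prod.fst '' C, hC.image _, Set.ext fun z => ?_⟩
    simp only [Set.mem_iUnion₂, Set.mem_image, Set.mem_ofPred_eq, exists_exists_and_eq_and]
    exact exists_congr fun p =>
      ⟨fun ⟨hp, hz⟩ => ⟨hp, (hu.mem_closedBall_iff_of_mem (hy₀ p hp)).1 hz⟩,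
        fun ⟨hp, hz⟩ => ⟨hp, (hu.mem_closedBall_iff_of_mem (hy₀ p hp)).2 hz⟩⟩
  · rintro ⟨y₀, R, hR, rfl⟩
    refine ⟨(·, y₀) '' R, hR.image _, ⟨y₀, ?_⟩, Set.ext fun z => ?_⟩
    · rintro _ ⟨α, -, rfl⟩
      exact hu.self_mem_closedBall α y₀
    · simp [closedBall]

section FixedPoint

variable {g : Y → Y} {c : Y}
  (hg : ∀ x ∈ smallBall u c (g c), ∀ y ∈ smallBall u c (g c), x ≠ y → u x y < u (g x) (g y))
include hg

theorem dist_le_dist_apply {x y : Y} (hx : x ∈ smallBall u c (g c))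
    (hy : y ∈ smallBall u c (g c)) : u x y ≤ u (g x) (g y) := by
  rcases eq_or_ne x y with rfl | hxy
  · rw [hu.dist_self, hu.dist_self]
  · exact (hg x hx y hy hxy).le

theorem smallBall_apply_subset_of_mem_of_mem {x y : Y} (hx : x ∈ smallBall u c (g c))
    (hy : y ∈ smallBall u c (g c)) (hxy : y ∈ smallBall u x (g x)) :
    smallBall u y (g y) ⊆ smallBall u x (g x) := by
  refine hu.closedBall_subset_of_mem hxy (hu.le_dist_of_le_of_le (x := x) ?_ ?_)
  · exact hxy.trans_eq (hu.dist_comm x y)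
  · exact hu.le_dist_of_le_of_le le_rfl (hxy.trans (hu.dist_le_dist_apply hg hx hy))

theorem smallBall_apply_subset {x y : Y} (hx : x ∈ smallBall u c (g c))
    (hxy : y ∈ smallBall u x (g x)) : smallBall u y (g y) ⊆ smallBall u x (g x) := by
  have hB : smallBall u x (g x) ⊆ smallBall u c (g c) :=
    hu.smallBall_apply_subset_of_mem_of_mem hg (hu.self_mem_closedBall _ c) hx hx
  exact hu.smallBall_apply_subset_of_mem_of_mem hg hx (hB hxy) hxy

theorem exists_fixedPoint_mem (hsc : SphericallyComplete u) :
    ∃ z ∈ smallBall u c (g c), g z = z := by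
  have hself (y : Y) : y ∈ smallBall u y (g y) := hu.self_mem_closedBall _ y
  have happly (y : Y) : g y ∈ smallBall u y (g y) := le_refl (u y (g y))
  set S := (fun y => smallBall u y (g y)) '' smallBall u c (g c)
  have hlb : ∀ C ⊆ S, IsChain (· ⊆ ·) C → C.Nonempty → ∃ lb ∈ S, ∀ s ∈ C, lb ⊆ s := by
    intro C hCS hC hCne
    obtain ⟨z, hz⟩ := hsc C hCne
      (fun s hs => by obtain ⟨y, -, rfl⟩ := hCS hs; exact hu.isBall_closedBall _ _) hC
    obtain ⟨s₀, hs₀⟩ := hCne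
    obtain ⟨y₀, hy₀, rfl⟩ := hCS hs₀
    have hzB : z ∈ smallBall u c (g c) := hu.smallBall_apply_subset hg (hself c) hy₀ (hz _ hs₀)
    refine ⟨smallBall u z (g z), ⟨z, hzB, rfl⟩, fun s hs => ?_⟩
    obtain ⟨y, hy, rfl⟩ := hCS hs
    exact hu.smallBall_apply_subset hg hy (hz _ hs)
  obtain ⟨_, -, ⟨z, hz, rfl⟩, hmin⟩ := zorn_superset_nonempty S hlb _ ⟨c, hself c, rfl⟩
  refine ⟨z, hz, by_contra fun hne => ?_⟩
  have hgz : g z ∈ smallBall u c (g c) := hu.smallBall_apply_subset hg (hself c) hz (happly z)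
  have hsub := hmin ⟨g z, hgz, rfl⟩ (hu.smallBall_apply_subset hg hz (happly z))
  exact (hg z hz (g z) hgz (Ne.symm hne)).not_ge ((hsub (hself z)).trans_eq (hu.dist_comm _ _))

theorem exists_fixedPoint (hsc : SphericallyComplete u) :
    ∃ z, g z = z ∧ u c z = u c (g c) := by
  obtain ⟨z, hz, hfix⟩ := hu.exists_fixedPoint_mem hg hsc
  refine ⟨z, hfix, le_antisymm ?_ hz⟩
  rcases eq_or_ne c z with rfl | hcz
  · rw [hfix]
  · refine hu.le_dist_of_le_of_le le_rfl ?_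
    calc u c z ≤ u (g c) (g z) := (hg c (hu.self_mem_closedBall _ c) z hz hcz).le
      _ = u z (g c) := by rw [hfix, hu.dist_comm]

end FixedPoint

end IsUltrametric

def piDist {Y Γ ι : Type*} [LinearOrder Γ] [OrderTop Γ] [Fintype ι] (u : Y → Y → Γ)
    (x y : ι → Y) : Γ :=
  Finset.univ.inf fun i => u (x i) (y i)

section Pi

variable {Y Γ ι : Type*} [LinearOrder Γ] [OrderTop Γ] [Fintype ι] {u : Y → Y → Γ}

theorem le_piDist_iff {α : Γ} {x y : ι → Y} : α ≤ piDist u x y ↔ ∀ i, α ≤ u (x i) (y i) := by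
  simp [piDist]

namespace IsUltrametric

variable (hu : IsUltrametric u)
include hu

theorem pi : IsUltrametric (piDist u : (ι → Y) → (ι → Y) → Γ) := by
  refine ⟨fun x y => ?_, fun x y z => ?_, fun x y => ?_⟩
  · simp [piDist, Finset.inf_eq_top_iff, hu.1, funext_iff]
  · exact le_piDist_iff.2 fun i => hu.le_dist_of_le_of_le
      ((min_le_left _ _).trans (Finset.inf_le (Finset.mem_univ i)))
      ((min_le_right _ _).trans (Finset.inf_le (Finset.mem_univ i)))
  · simp only [piDist, hu.dist_comm (x _)]

theorem isBall_image_eval [DecidableEq ι] {B : Set (ι → Y)} (hB : IsBall (piDist u) B)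
    (i : ι) : IsBall u (Function.eval i '' B) := by
  obtain ⟨y₀, R, hR, rfl⟩ := hu.pi.isBall_iff.1 hB
  refine hu.isBall_iff.2 ⟨y₀ i, R, hR, Set.ext fun s => ⟨?_, ?_⟩⟩
  · rintro ⟨z, ⟨α, hα, hz⟩, rfl⟩
    exact ⟨α, hα, le_piDist_iff.1 hz i⟩
  · rintro ⟨α, hα, hs⟩
    refine ⟨Function.update y₀ i s, ⟨α, hα, le_piDist_iff.2 fun j => ?_⟩, by simp⟩
    rcases eq_or_ne j i with rfl | hj
    · simpa using hs
    · simp [hj, hu.dist_self]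

theorem sphericallyComplete_piDist (hsc : SphericallyComplete u) :
    SphericallyComplete (piDist u : (ι → Y) → (ι → Y) → Γ) := by
  classical
  intro N hN hball hchain
  have hproj (i : ι) : (⋂₀ ((Function.eval i '' ·) '' N)).Nonempty :=
    hsc _ (hN.image _) (by rintro _ ⟨B, hB, rfl⟩; exact hu.isBall_image_eval (hball B hB) i)
      (hchain.image_of_map_rel _ _ _ fun _ _ h => Set.image_mono h)
  choose t ht using hproj
  refine ⟨t, fun B hB => ?_⟩
  obtain ⟨y₀, R, hR, rfl⟩ := hu.pi.isBall_iff.1 (hball B hB)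
  have hcoord (i : ι) : ∃ α ∈ R, α ≤ u (y₀ i) (t i) := by
    obtain ⟨z, ⟨α, hα, hz⟩, hzi⟩ := ht i _ ⟨_, hB, rfl⟩
    exact ⟨α, hα, hzi ▸ le_piDist_iff.1 hz i⟩
  choose α hαR hα using hcoord
  rcases isEmpty_or_nonempty ι with hι | hι
  · obtain ⟨β, hβ⟩ := hR
    exact ⟨β, hβ, le_piDist_iff.2 fun i => hι.elim i⟩
  · obtain ⟨i₀, -, hi₀⟩ := Finset.exists_min_image Finset.univ α Finset.univ_nonempty
    exact ⟨α i₀, hαR i₀, le_piDist_iff.2 fun i => (hi₀ i (Finset.mem_univ i)).trans (hα i)⟩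

end IsUltrametric

end Pi

namespace IsFieldVal

variable {K : Type*} [Field K] {Γ : Type*} [AddCommGroup Γ] [LinearOrder Γ]
  {v : K → WithTop Γ}

theorem map_add [IsOrderedAddMonoid Γ] (hv : IsFieldVal v) (a b : K) :
    min (v a) (v b) ≤ v (a + b) := by
  have hneg : v (-b) = v b := by
    have hle (c : K) : v c ≤ v (-c) := by simpa [(hv.1 0).2 rfl] using hv.2.2 0 c
    exact le_antisymm (by simpa using hle (-b)) (hle b)
  simpa [hneg] using hv.2.2 a (-b)

theorem map_one [IsOrderedAddMonoid Γ] (hv : IsFieldVal v) : v 1 = 0 := by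
  have h : v 1 = v 1 + v 1 := by simpa using hv.2.1 1 1
  lift v 1 to Γ using fun h1 => one_ne_zero ((hv.1 1).1 h1) with g
  rw [← WithTop.coe_add, WithTop.coe_inj, left_eq_add] at h
  rw [h, WithTop.coe_zero]

theorem exists_addValuation_coe_eq [IsOrderedAddMonoid Γ] (hv : IsFieldVal v) :
    ∃ w : AddValuation K (WithTop Γ), ⇑w = v :=
  ⟨AddValuation.of v ((hv.1 0).2 rfl) hv.map_one hv.map_add hv.2.1, rfl⟩

end IsFieldVal

namespace AddValuation

variable {R Γ₀ : Type*} [Ring R] [LinearOrderedAddCommMonoidWithTop Γ₀] (w : AddValuation R Γ₀)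

def integer : Subring R where
  carrier := {x | 0 ≤ w x}
  mul_mem' {a b} ha hb := by
    simp only [Set.mem_ofPred_eq, map_mul] at *
    exact add_nonneg ha hb
  one_mem' := w.map_one.ge
  add_mem' := w.map_le_add
  zero_mem' := by simp
  neg_mem' := by simp [w.map_neg]

theorem isUltrametric_sub {K : Type*} [DivisionRing K] [Nontrivial Γ₀] (w : AddValuation K Γ₀) :
    IsUltrametric fun a b : K => w (a - b) :=
  ⟨fun a b => by simp [w.top_iff, sub_eq_zero],
    fun a b c => by simpa using w.map_add (b - a) (a - c), w.map_sub_swap⟩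

end AddValuation

namespace Subring

variable {R n : Type*} [CommRing R] [Fintype n] [DecidableEq n] (S : Subring R)
  {M : Matrix n n R} (hM : ∀ i j, M i j ∈ S)
include hM

theorem exists_mapMatrix_subtype_eq : ∃ M' : Matrix n n S, S.subtype.mapMatrix M' = M :=
  ⟨.of fun i j => ⟨_, hM i j⟩, rfl⟩

theorem det_mem : M.det ∈ S := by
  obtain ⟨M', rfl⟩ := S.exists_mapMatrix_subtype_eq hM
  rw [← RingHom.map_det]
  exact SetLike.coe_mem _

theorem adjugate_mem (i j : n) : M.adjugate i j ∈ S := by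
  obtain ⟨M', rfl⟩ := S.exists_mapMatrix_subtype_eq hM
  rw [← RingHom.map_adjugate]
  exact SetLike.coe_mem _

end Subring

section MinVal

open scoped Matrix

variable {K : Type*} [Field K] {Γ : Type*} [AddCommGroup Γ] [LinearOrder Γ]
  [IsOrderedAddMonoid Γ] (w : AddValuation K (WithTop Γ)) {n : ℕ}

theorem minVal_le (x : Fin n → K) (i : Fin n) : minVal w x ≤ w (x i) :=
  Finset.inf_le (Finset.mem_univ i)

theorem le_minVal_iff {c : WithTop Γ} {x : Fin n → K} : c ≤ minVal w x ↔ ∀ i, c ≤ w (x i) := by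
  simp [minVal]

theorem isUltrametric_minVal : IsUltrametric fun x y : Fin n → K => minVal w (x - y) :=
  w.isUltrametric_sub.pi

theorem sphericallyComplete_minVal (hsc : SphericallyComplete fun a b : K => w (a - b)) :
    SphericallyComplete fun x y : Fin n → K => minVal w (x - y) :=
  w.isUltrametric_sub.sphericallyComplete_piDist hsc

theorem minVal_sub_comm (x y : Fin n → K) : minVal w (x - y) = minVal w (y - x) :=
  (isUltrametric_minVal w).dist_comm x y

theorem min_le_minVal_add (x y : Fin n → K) :
    min (minVal w x) (minVal w y) ≤ minVal w (x + y) :=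
  (le_minVal_iff w).2 fun i =>
    (min_le_min (minVal_le w x i) (minVal_le w y i)).trans (w.map_add _ _)

theorem min_le_minVal_sub (x y : Fin n → K) :
    min (minVal w x) (minVal w y) ≤ minVal w (x - y) :=
  (le_minVal_iff w).2 fun i =>
    (min_le_min (minVal_le w x i) (minVal_le w y i)).trans (w.map_sub _ _)

theorem minVal_smul (c : K) (x : Fin n → K) : minVal w (c • x) = w c + minVal w x := by
  simp only [minVal, Pi.smul_apply, smul_eq_mul, w.map_mul]
  exact (Finset.apply_inf_eq_inf_comp_of_linearOrder _ (fun _ _ h => add_le_add_right h _)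
    (by simp)).symm

theorem le_minVal_mulVec {M : Matrix (Fin n) (Fin n) K} {c : WithTop Γ}
    (hM : ∀ i j, c ≤ w (M i j)) (x : Fin n → K) : c + minVal w x ≤ minVal w (M *ᵥ x) :=
  (le_minVal_iff w).2 fun i => w.map_le_sum (s := Finset.univ) fun j _ =>
    (add_le_add (hM i j) (minVal_le w x j)).trans_eq (w.map_mul _ _).symm

theorem minVal_le_minVal_mulVec {M : Matrix (Fin n) (Fin n) K} (hM : ∀ i j, M i j ∈ w.integer)
    (x : Fin n → K) : minVal w x ≤ minVal w (M *ᵥ x) := by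
  simpa using le_minVal_mulVec w hM x

theorem val_det_add_minVal_inv_mulVec {M : Matrix (Fin n) (Fin n) K} (hM : M.det ≠ 0)
    (x : Fin n → K) : w M.det + minVal w (M⁻¹ *ᵥ x) = minVal w (M.adjugate *ᵥ x) := by
  rw [Matrix.inv_def, Ring.inverse_eq_inv', Matrix.smul_mulVec, minVal_smul, ← add_assoc,
    ← w.map_mul, mul_inv_cancel₀ hM, w.map_one, zero_add]

theorem minVal_le_val_det_add_minVal_inv_mulVec {M : Matrix (Fin n) (Fin n) K}
    (hM : ∀ i j, M i j ∈ w.integer) (hdet : M.det ≠ 0) (x : Fin n → K) :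
    minVal w x ≤ w M.det + minVal w (M⁻¹ *ᵥ x) := by
  rw [val_det_add_minVal_inv_mulVec w hdet]
  exact minVal_le_minVal_mulVec w (w.integer.adjugate_mem hM) x

end MinVal

namespace MvPolynomial

section Integral

variable {R S σ : Type*} [CommRing R] [CommRing S]

theorem pderiv_mem_range_map {φ : R →+* S} {p : MvPolynomial σ S} (hp : p ∈ (map φ).range)
    (i : σ) : pderiv i p ∈ (map φ).range := by
  obtain ⟨q, rfl⟩ := hp
  exact ⟨pderiv i q, pderiv_map.symm⟩

theorem mem_range_map_subtype_iff {T : Subring R} {p : MvPolynomial σ R} :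
    p ∈ (map T.subtype).range ↔ ∀ m, p.coeff m ∈ T := by
  refine ⟨fun ⟨q, hq⟩ m => hq ▸ by rw [coeff_map]; exact SetLike.coe_mem _, fun hp => ?_⟩
  refine mem_range_map_iff_coeffs_subset.2 fun c hc => ?_
  obtain ⟨m, -, rfl⟩ := mem_coeffs_iff.1 hc
  exact ⟨⟨_, hp m⟩, rfl⟩

theorem eval_mem_of_mem_range_map {T : Subring R} {p : MvPolynomial σ R}
    (hp : p ∈ (map T.subtype).range) {x : σ → R} (hx : ∀ i, x i ∈ T) : eval x p ∈ T := by
  obtain ⟨q, rfl⟩ := hp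
  exact eval_mem (fun m _ => by rw [coeff_map]; exact SetLike.coe_mem _) hx

end Integral

section Taylor

variable {R σ : Type*} [CommRing R] [Fintype σ]

noncomputable def taylorRemainder (p : MvPolynomial σ R) (x h : σ → R) : R :=
  eval (x + h) p - eval x p - ∑ j, eval x (pderiv j p) * h j

variable (x h : σ → R)

theorem eval_add_sub_eval (p : MvPolynomial σ R) :
    eval (x + h) p - eval x p = taylorRemainder p x h + ∑ j, eval x (pderiv j p) * h j := by
  rw [taylorRemainder]
  ring

theorem taylorRemainder_C (a : R) : taylorRemainder (C a) x h = 0 := by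
  simp [taylorRemainder]

theorem taylorRemainder_add (p q : MvPolynomial σ R) :
    taylorRemainder (p + q) x h = taylorRemainder p x h + taylorRemainder q x h := by
  simp only [taylorRemainder, map_add, add_mul, Finset.sum_add_distrib]
  ring

theorem taylorRemainder_mul_X (p : MvPolynomial σ R) (i : σ) :
    taylorRemainder (p * X i) x h =
      x i * taylorRemainder p x h + h i * (eval (x + h) p - eval x p) := by
  classical
  simp only [taylorRemainder, map_mul, eval_X, Pi.add_apply, Derivation.leibniz, pderiv_X,
    Pi.single_apply, smul_eq_mul, mul_ite, mul_one, mul_zero, map_add, apply_ite (eval x),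
    map_zero, add_mul, ite_mul, zero_mul, Finset.sum_add_distrib, Finset.sum_ite_eq,
    Finset.mem_univ, ↓reduceIte]
  rw [mul_sub, Finset.mul_sum]
  simp only [mul_assoc]
  ring

end Taylor

end MvPolynomial

section IntegralPolynomial

open MvPolynomial

variable {K : Type*} [Field K] {Γ : Type*} [AddCommGroup Γ] [LinearOrder Γ]
  [IsOrderedAddMonoid Γ] (w : AddValuation K (WithTop Γ)) {n : ℕ}
  {p : MvPolynomial (Fin n) K} {x : Fin n → K} (hx : ∀ i, x i ∈ w.integer)
include hx

theorem le_val_sum_eval_pderiv_mul (hp : p ∈ (map w.integer.subtype).range) (h : Fin n → K) :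
    minVal w h ≤ w (∑ j, eval x (pderiv j p) * h j) :=
  w.map_le_sum fun j _ => by
    rw [w.map_mul]
    exact le_add_of_nonneg_of_le (eval_mem_of_mem_range_map (pderiv_mem_range_map hp j) hx)
      (minVal_le w h j)

theorem le_val_taylorRemainder (hp : p ∈ (map w.integer.subtype).range) {h : Fin n → K}
    (hh : ∀ i, h i ∈ w.integer) : minVal w h + minVal w h ≤ w (taylorRemainder p x h) := by
  have hμ : 0 ≤ minVal w h := (le_minVal_iff w).2 hh
  obtain ⟨q, rfl⟩ := hp
  induction q using MvPolynomial.induction_on with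
  | C a => simp [taylorRemainder_C]
  | add q r hq hr =>
    rw [map_add, taylorRemainder_add]
    exact w.map_le_add hq hr
  | mul_X q i hq =>
    set P := map w.integer.subtype q
    have hdiff : minVal w h ≤ w (eval (x + h) P - eval x P) := by
      rw [eval_add_sub_eval]
      exact w.map_le_add ((le_add_of_nonneg_left hμ).trans hq)
        (le_val_sum_eval_pderiv_mul w hx ⟨q, rfl⟩ h)
    rw [map_mul, map_X, taylorRemainder_mul_X]
    refine w.map_le_add ?_ ?_ <;> rw [w.map_mul]
    · exact le_add_of_nonneg_of_le (hx i) hq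
    · exact add_le_add (minVal_le w h i) hdiff

theorem le_val_eval_sub_eval (hp : p ∈ (map w.integer.subtype).range) {y : Fin n → K}
    (hy : ∀ i, y i ∈ w.integer) : minVal w (y - x) ≤ w (eval y p - eval x p) := by
  have hh (i : Fin n) : (y - x) i ∈ w.integer := sub_mem (hy i) (hx i)
  have hμ : 0 ≤ minVal w (y - x) := (le_minVal_iff w).2 hh
  rw [← add_sub_cancel x y, eval_add_sub_eval, add_sub_cancel]
  exact w.map_le_add ((le_add_of_nonneg_left hμ).trans (le_val_taylorRemainder w hx hp hh))
    (le_val_sum_eval_pderiv_mul w hx hp _)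

end IntegralPolynomial

section NewtonMap

open MvPolynomial
open scoped Matrix

variable {R : Type*} [CommRing R] {n : ℕ}

noncomputable def jacobianAt (f : Fin n → MvPolynomial (Fin n) R) (x : Fin n → R) :
    Matrix (Fin n) (Fin n) R :=
  Matrix.of fun i j => eval x (pderiv j (f i))

noncomputable def newtonMap (f : Fin n → MvPolynomial (Fin n) R) (x : Fin n → R) : Fin n → R :=
  x - (jacobianAt f x)⁻¹ *ᵥ fun i => eval x (f i)

variable (f : Fin n → MvPolynomial (Fin n) R)

theorem eval_eq_add_jacobianAt_mulVec_add_taylorRemainder (x y : Fin n → R) :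
    (fun i => eval x (f i)) = (fun i => eval y (f i)) + jacobianAt f y *ᵥ (x - y) +
      fun i => taylorRemainder (f i) y (x - y) := by
  funext i
  have := eval_add_sub_eval y (x - y) (f i)
  rw [add_sub_cancel] at this
  simp only [Pi.add_apply, Matrix.mulVec, dotProduct, jacobianAt, Matrix.of_apply]
  linear_combination this

theorem newtonMap_eq_self_iff {x : Fin n → R} (hx : IsUnit (jacobianAt f x).det) :
    newtonMap f x = x ↔ ∀ i, eval x (f i) = 0 := by
  rw [newtonMap, sub_eq_self]
  constructor
  · intro h i
    simpa [Matrix.mulVec_mulVec, Matrix.mul_nonsing_inv _ hx] using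
      congrFun (congrArg (jacobianAt f x *ᵥ ·) h) i
  · intro h
    simp [show (fun i => eval x (f i)) = 0 from funext h]

/-- Each term on the right is visibly small: a difference of Jacobians applied to
`(x - y) + (y - newtonMap f y)`, and a Taylor remainder. -/
theorem newtonMap_sub_newtonMap {x y : Fin n → R} (hx : IsUnit (jacobianAt f x).det)
    (hy : IsUnit (jacobianAt f y).det) :
    newtonMap f x - newtonMap f y = (jacobianAt f x)⁻¹ *ᵥ
      ((jacobianAt f x - jacobianAt f y) *ᵥ (x - y + (y - newtonMap f y)) -
        fun i => taylorRemainder (f i) y (x - y)) := by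
  have hFy : jacobianAt f y *ᵥ (y - newtonMap f y) = fun i => eval y (f i) := by
    rw [newtonMap, sub_sub_cancel, Matrix.mulVec_mulVec, Matrix.mul_nonsing_inv _ hy,
      Matrix.one_mulVec]
  rw [Matrix.sub_mulVec, Matrix.mulVec_sub, Matrix.mulVec_sub, Matrix.mulVec_mulVec,
    Matrix.nonsing_inv_mul _ hx, Matrix.one_mulVec, Matrix.mulVec_add (jacobianAt f y), hFy]
  conv_lhs => rw [newtonMap, eval_eq_add_jacobianAt_mulVec_add_taylorRemainder f x y]
  simp only [Matrix.mulVec_add]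
  abel

end NewtonMap

section NewtonContraction

open MvPolynomial
open scoped Matrix

variable {K : Type*} [Field K] {Γ : Type*} [AddCommGroup Γ] [LinearOrder Γ]
  [IsOrderedAddMonoid Γ] (w : AddValuation K (WithTop Γ)) {n : ℕ}
  {f : Fin n → MvPolynomial (Fin n) K} (hf : ∀ i, f i ∈ (map w.integer.subtype).range)
include hf

theorem jacobianAt_mem_integer {x : Fin n → K} (hx : ∀ i, x i ∈ w.integer) (i j : Fin n) :
    jacobianAt f x i j ∈ w.integer :=
  eval_mem_of_mem_range_map (pderiv_mem_range_map (hf i) j) hx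

theorem le_val_jacobianAt_sub {x y : Fin n → K} (hx : ∀ i, x i ∈ w.integer)
    (hy : ∀ i, y i ∈ w.integer) (i j : Fin n) :
    minVal w (x - y) ≤ w ((jacobianAt f x - jacobianAt f y) i j) :=
  le_val_eval_sub_eval w hy (pderiv_mem_range_map (hf i) j) hx

variable {b : Fin n → K} (hb : ∀ i, b i ∈ w.integer)
include hb

theorem mem_integer_of_val_det_lt {x : Fin n → K}
    (hx : w (jacobianAt f b).det < minVal w (x - b)) (i : Fin n) : x i ∈ w.integer := by
  have hδ : 0 ≤ w (jacobianAt f b).det := w.integer.det_mem (jacobianAt_mem_integer w hf hb)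
  simpa using add_mem (hb i) ((hδ.trans hx.le).trans (minVal_le w _ i))

theorem val_det_jacobianAt_eq {x : Fin n → K} (hx : w (jacobianAt f b).det < minVal w (x - b)) :
    w (jacobianAt f x).det = w (jacobianAt f b).det := by
  set P := (Matrix.of fun i j => pderiv j (f i)).det
  have hP : P ∈ (map w.integer.subtype).range :=
    Subring.det_mem _ fun i j => pderiv_mem_range_map (hf i) j
  have heval (z : Fin n → K) : eval z P = (jacobianAt f z).det := RingHom.map_det _ _
  refine w.map_eq_of_lt_sub (hx.trans_le ?_)
  rw [← heval, ← heval]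
  exact le_val_eval_sub_eval w hb hP (mem_integer_of_val_det_lt w hf hb hx)

theorem det_jacobianAt_ne_zero {x : Fin n → K}
    (hx : w (jacobianAt f b).det < minVal w (x - b)) : (jacobianAt f x).det ≠ 0 := by
  rw [← w.ne_top_iff, val_det_jacobianAt_eq w hf hb hx]
  exact hx.ne_top

theorem le_minVal_newtonMap_sub {x y : Fin n → K}
    (hx : w (jacobianAt f b).det < minVal w (x - b))
    (hy : w (jacobianAt f b).det < minVal w (y - b)) :
    minVal w (x - y) + min (minVal w (x - y)) (minVal w (y - newtonMap f y)) ≤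
      w (jacobianAt f b).det + minVal w (newtonMap f x - newtonMap f y) := by
  have hxO := mem_integer_of_val_det_lt w hf hb hx
  have hyO := mem_integer_of_val_det_lt w hf hb hy
  have hxyO (i : Fin n) : (x - y) i ∈ w.integer := sub_mem (hxO i) (hyO i)
  have hdet := det_jacobianAt_ne_zero w hf hb hx
  rw [newtonMap_sub_newtonMap f hdet.isUnit (det_jacobianAt_ne_zero w hf hb hy).isUnit,
    ← val_det_jacobianAt_eq w hf hb hx]
  refine le_trans ?_
    (minVal_le_val_det_add_minVal_inv_mulVec w (jacobianAt_mem_integer w hf hxO) hdet _)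
  refine le_trans (le_min ?_ ?_) (min_le_minVal_sub w _ _)
  · exact (add_le_add_right (min_le_minVal_add w _ _) _).trans
      (le_minVal_mulVec w (le_val_jacobianAt_sub w hf hxO hyO) _)
  · exact (add_le_add_right (min_le_left _ _) _).trans
      ((le_minVal_iff w).2 fun i => le_val_taylorRemainder w hyO (hf i) hxyO)

theorem minVal_sub_lt_minVal_newtonMap_sub {x y : Fin n → K}
    (hx : w (jacobianAt f b).det < minVal w (x - b))
    (hy : w (jacobianAt f b).det < minVal w (y - b))
    (hyN : w (jacobianAt f b).det < minVal w (y - newtonMap f y)) (hxy : x ≠ y) :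
    minVal w (x - y) < minVal w (newtonMap f x - newtonMap f y) := by
  have hu := isUltrametric_minVal (n := n) w
  have hxy' : minVal w (x - y) ≠ ⊤ := fun h => hxy ((hu.1 x y).1 h)
  have hδ : w (jacobianAt f b).det < minVal w (x - y) :=
    (lt_min hx (hy.trans_eq (minVal_sub_comm w y b))).trans_le (hu.2.1 b x y)
  rw [← WithTop.add_lt_add_iff_left hx.ne_top]
  calc w (jacobianAt f b).det + minVal w (x - y)
      = minVal w (x - y) + w (jacobianAt f b).det := add_comm _ _
    _ < minVal w (x - y) + min (minVal w (x - y)) (minVal w (y - newtonMap f y)) :=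
      WithTop.add_lt_add_left hxy' (lt_min hδ hyN)
    _ ≤ _ := le_minVal_newtonMap_sub w hf hb hx hy

variable (hnewton : w (jacobianAt f b).det + w (jacobianAt f b).det <
  minVal w fun i => eval b (f i))
include hnewton

theorem val_det_jacobianAt_lt_minVal_sub_newtonMap :
    w (jacobianAt f b).det < minVal w (b - newtonMap f b) := by
  have hδ : w (jacobianAt f b).det ≠ ⊤ := fun h => by simp [h] at hnewton
  rw [← WithTop.add_lt_add_iff_left hδ, newtonMap, sub_sub_cancel,
    val_det_add_minVal_inv_mulVec w (w.ne_top_iff.1 hδ)]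
  exact hnewton.trans_le (minVal_le_minVal_mulVec w
    (w.integer.adjugate_mem (jacobianAt_mem_integer w hf hb)) _)

theorem newtonMap_contracting :
    ∀ x ∈ smallBall (fun x y => minVal w (x - y)) b (newtonMap f b),
      ∀ y ∈ smallBall (fun x y => minVal w (x - y)) b (newtonMap f b),
        x ≠ y → minVal w (x - y) < minVal w (newtonMap f x - newtonMap f y) := by
  have hu := isUltrametric_minVal (n := n) w
  have hε := val_det_jacobianAt_lt_minVal_sub_newtonMap w hf hb hnewton
  have hclose (y : Fin n → K) (hy : minVal w (b - newtonMap f b) ≤ minVal w (b - y)) :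
      w (jacobianAt f b).det < minVal w (y - b) :=
    hε.trans_le (hy.trans_eq (hu.dist_comm b y))
  have hbN (y : Fin n → K) (hy : minVal w (b - newtonMap f b) ≤ minVal w (b - y)) :
      minVal w (b - newtonMap f b) ≤ minVal w (newtonMap f b - newtonMap f y) := by
    rcases eq_or_ne y b with rfl | hyb
    · exact le_top.trans_eq (hu.dist_self _).symm
    · have hbb : w (jacobianAt f b).det < minVal w (b - b) :=
        hε.trans_le (le_top.trans_eq (hu.dist_self b).symm)
      exact (hy.trans_eq (hu.dist_comm b y)).trans ((minVal_sub_lt_minVal_newtonMap_sub w hf hb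
        (hclose y hy) hbb hε hyb).le.trans_eq (hu.dist_comm _ _))
  intro x hx y hy hxy
  refine minVal_sub_lt_minVal_newtonMap_sub w hf hb (hclose x hx) (hclose y hy) ?_ hxy
  exact hε.trans_le (hu.le_dist_of_le_of_le (x := b) (hy.trans_eq (hu.dist_comm b y))
    (hu.le_dist_of_le_of_le le_rfl (hbN y hy)))

end NewtonContraction

/-- multidimensional Newton's Lemma in a spherically complete valued
field. -/
theorem multidim_newtons_lemma {K : Type*} [Field K] {Γ : Type*}
    [AddCommGroup Γ] [LinearOrder Γ] [IsOrderedAddMonoid Γ] (v : K → WithTop Γ) (hv : IsFieldVal v)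
    (hsc : SphericallyComplete (fun a b : K => v (a - b)))
    {n : ℕ} (f : Fin n → MvPolynomial (Fin n) K)
    (hf : ∀ i m, 0 ≤ v (MvPolynomial.coeff m (f i)))
    (b : Fin n → K) (hb : ∀ i, 0 ≤ v (b i))
    (J : Matrix (Fin n) (Fin n) K)
    (hJ : J = Matrix.of fun i j => MvPolynomial.eval b (MvPolynomial.pderiv j (f i)))
    (hnewton : v J.det + v J.det < minVal v fun i => MvPolynomial.eval b (f i)) :
    ∃! a : Fin n → K, (∀ i, 0 ≤ v (a i)) ∧ (∀ i, MvPolynomial.eval a (f i) = 0) ∧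
      v J.det < minVal v (a - b) ∧
      minVal v (a - b) + v J.det =
        minVal v (J.adjugate.mulVec fun i => MvPolynomial.eval b (f i)) := by
  obtain ⟨w, rfl⟩ := hv.exists_addValuation_coe_eq
  obtain rfl : J = jacobianAt f b := hJ
  have hf' (i : Fin n) : f i ∈ (MvPolynomial.map w.integer.subtype).range :=
    MvPolynomial.mem_range_map_subtype_iff.2 (hf i)
  have hu := isUltrametric_minVal (n := n) w
  obtain ⟨a, hfix, hdist⟩ := hu.exists_fixedPoint (newtonMap_contracting w hf' hb hnewton)
    (sphericallyComplete_minVal w hsc)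
  have hab : w (jacobianAt f b).det < minVal w (a - b) := by
    rw [minVal_sub_comm, hdist]
    exact val_det_jacobianAt_lt_minVal_sub_newtonMap w hf' hb hnewton
  have hroot := (newtonMap_eq_self_iff f (det_jacobianAt_ne_zero w hf' hb hab).isUnit).1 hfix
  refine ⟨a, ⟨mem_integer_of_val_det_lt w hf' hb hab, hroot, hab, ?_⟩, ?_⟩
  · rw [minVal_sub_comm, hdist, newtonMap, sub_sub_cancel, add_comm,
      val_det_add_minVal_inv_mulVec w (w.ne_top_iff.1 hab.ne_top)]
  · rintro a' ⟨-, ha'root, ha'b, -⟩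
    by_contra hne
    have haN : w (jacobianAt f b).det < minVal w (a - newtonMap f a) := by
      rw [hfix]
      exact hab.trans_le (le_top.trans_eq (hu.dist_self a).symm)
    have := minVal_sub_lt_minVal_newtonMap_sub w hf' hb ha'b hab haN hne
    rw [(newtonMap_eq_self_iff f (det_jacobianAt_ne_zero w hf' hb ha'b).isUnit).2 ha'root,
      hfix] at this
    exact this.false
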